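/- arXiv:2205.10914 — 2 statements merged into one kernel-verified Lean document; each statement's English description precedes it below -/
import Mathlib

section
/- For a graph with constant (uniform) node labels and every i ≥ 1, the walk labeling κ^{(i)} and the extended-connectivity labeling ec^{(i)} are equivalent: κ^{(i)}(u) = κ^{(i)}(v) if and only if ec^{(i)}(u) = ec^{(i)}(v). -/
open Finset

/-- A walk represented as a vertex function with consecutive vertices adjacent. -/
def IsWalk {V : Type*} (G : SimpleGraph V) {i : ℕ} (f : Fin (i+1) → V) : Prop :=
  ∀ j : Fin i, G.Adj (f j.castSucc) (f j.succ)

/-- Walks of length `i` in `G`. -/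
abbrev WalkLen {V : Type*} (G : SimpleGraph V) (i : ℕ) : Type _ :=
  { f : Fin (i+1) → V // IsWalk G f }

/-- Walks of length `i` in `G` starting at `v`. -/
abbrev WalkFrom {V : Type*} (G : SimpleGraph V) (v : V) (i : ℕ) : Type _ :=
  { f : Fin (i+1) → V // f 0 = v ∧ IsWalk G f }

noncomputable instance {V : Type*} (G : SimpleGraph V) [Fintype V] (i : ℕ) :
    Fintype (WalkLen G i) := Fintype.ofFinite _

noncomputable instance {V : Type*} (G : SimpleGraph V) [Fintype V] (v : V) (i : ℕ) :
    Fintype (WalkFrom G v i) := Fintype.ofFinite _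

/-- Label sequence of a walk. -/
def lseq {V S : Type*} (lab : V → S) {i : ℕ} (f : Fin (i+1) → V) : List S :=
  List.ofFn (lab ∘ f)

/-- κ^{(i)}(v): multiset of label sequences of walks of length exactly i from v. -/
noncomputable def kappa {V S : Type*} (G : SimpleGraph V) [Fintype V] (lab : V → S)
    (i : ℕ) (v : V) : Multiset (List S) :=
  (Finset.univ : Finset (WalkFrom G v i)).val.map fun w => lseq lab w.1

/-- κ₊^{(ℓ)}(v): multiset of label sequences of walks of length at most ℓ from v. -/
noncomputable def kappaPlus {V S : Type*} (G : SimpleGraph V) [Fintype V] (lab : V → S)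
    (ℓ : ℕ) (v : V) : Multiset (List S) :=
  ∑ i ∈ Finset.range (ℓ+1), kappa G lab i v

/-- The type of Weisfeiler-Leman labels after i iterations. -/
def WLL (S : Type*) : ℕ → Type _
  | 0 => S
  | (i+1) => WLL S i × Multiset (WLL S i)

/-- Weisfeiler-Leman refinement. -/
def wl {V S : Type*} (G : SimpleGraph V) [Fintype V] [DecidableRel G.Adj] (lab : V → S) :
    (i : ℕ) → V → WLL S i
  | 0, v => lab v
  | (i+1), v => (wl G lab i v, (G.neighborFinset v).val.map (wl G lab i))

/-- Morgan's extended connectivity. -/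
def ec {V : Type*} (G : SimpleGraph V) [Fintype V] [DecidableRel G.Adj] : ℕ → V → ℕ
  | 0, _ => 1
  | (i+1), v => ∑ u ∈ G.neighborFinset v, ec G i u

/-- Vertices of the direct product graph: pairs with matching labels. -/
abbrev ProdVert {V W S : Type*} (labG : V → S) (labH : W → S) : Type _ :=
  { p : V × W // labG p.1 = labH p.2 }

/-- The direct product graph of two labeled graphs. -/
def prodGraph {V W S : Type*} (G : SimpleGraph V) (H : SimpleGraph W)
    (labG : V → S) (labH : W → S) : SimpleGraph (ProdVert labG labH) where
  Adj p q := G.Adj p.1.1 q.1.1 ∧ H.Adj p.1.2 q.1.2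
  symm := ⟨fun _ _ h => ⟨h.1.symm, h.2.symm⟩⟩
  loopless := ⟨fun _ h => G.loopless.irrefl _ h.1⟩

open Classical in
/-- k_i(u,v): pairs of length-i walks from u and v with matching label sequences. -/
noncomputable def kwalk {V W S : Type*} (G : SimpleGraph V) (H : SimpleGraph W)
    [Fintype V] [Fintype W] (labG : V → S) (labH : W → S) (i : ℕ) (u : V) (v : W) : ℕ :=
  ∑ w : WalkFrom G u i, ∑ w' : WalkFrom H v i,
    ∏ j : Fin (i+1), if labG (w.1 j) = labH (w'.1 j) then 1 else 0

/-! With constant labels every walk of length `i` carries the same label sequence, so `κ^{(i)}(v)`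
is that sequence repeated once per walk. Splitting off the first step shows that the number of
walks of length `i` from `v` satisfies the recursion of `ec`, so it equals `ec^{(i)}(v)`. -/
noncomputable def walkFromSuccEquiv {V : Type*} (G : SimpleGraph V) [Fintype V]
    [DecidableRel G.Adj] (v : V) (i : ℕ) :
    WalkFrom G v (i + 1) ≃ Σ u : G.neighborFinset v, WalkFrom G (u : V) i where
  toFun w := ⟨⟨w.1 1, by
      simpa [SimpleGraph.mem_neighborFinset, w.2.1] using w.2.2 0⟩,
    ⟨Fin.tail w.1, rfl, fun j => by
      simpa only [Fin.tail, Fin.succ_castSucc] using w.2.2 j.succ⟩⟩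
  invFun p := ⟨Fin.cons v p.2.1, rfl, fun j => by
    induction j using Fin.cases with
    | zero => simpa [p.2.2.1] using (SimpleGraph.mem_neighborFinset _ _ _).mp p.1.2
    | succ k => simpa [← Fin.succ_castSucc] using p.2.2.2 k⟩
  left_inv w := Subtype.ext <| funext fun j => by
    induction j using Fin.cases with
    | zero => simp [w.2.1]
    | succ k => simp [Fin.tail]
  right_inv := by
    rintro ⟨⟨u, _⟩, g, hg0, _⟩
    have h1 : (Fin.cons v g : Fin (i + 2) → V) 1 = u := hg0
    refine Sigma.ext (Subtype.ext h1) ?_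
    rw [Subtype.heq_iff_coe_eq (fun f => by simp [h1])]
    simp

theorem card_walkFrom {V : Type*} [Fintype V] (G : SimpleGraph V) [DecidableRel G.Adj]
    (i : ℕ) (v : V) : Fintype.card (WalkFrom G v i) = ec G i v := by
  induction i generalizing v with
  | zero =>
    rw [ec, Fintype.card_eq_one_iff]
    refine ⟨⟨fun _ => v, rfl, finZeroElim⟩, fun w => Subtype.ext <| funext fun j => ?_⟩
    rw [Fin.fin_one_eq_zero j, w.2.1]
  | succ i ih =>
    rw [Fintype.card_congr (walkFromSuccEquiv G v i), Fintype.card_sigma, ec]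
    simp only [ih]
    exact Finset.sum_coe_sort _ _

theorem card_kappa {V S : Type*} [Fintype V] (G : SimpleGraph V) [DecidableRel G.Adj]
    (lab : V → S) (i : ℕ) (v : V) : Multiset.card (kappa G lab i v) = ec G i v := by
  rw [kappa, Multiset.card_map, ← card_walkFrom]
  rfl

theorem kappa_of_forall_eq {V S : Type*} [Fintype V] (G : SimpleGraph V) [DecidableRel G.Adj]
    (lab : V → S) (s : S) (hlab : ∀ v, lab v = s) (i : ℕ) (v : V) :
    kappa G lab i v = Multiset.replicate (ec G i v) (List.replicate (i + 1) s) := by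
  have hseq (w : WalkFrom G v i) : lseq lab w.1 = List.replicate (i + 1) s := by
    simp only [lseq, Function.comp_def, hlab, List.ofFn_const]
  rw [← card_kappa G lab i v, kappa, Multiset.map_congr rfl fun w _ => hseq w,
    Multiset.map_const', Multiset.card_replicate]

theorem stmt_5_general {V S : Type*} [Fintype V] (G : SimpleGraph V) [DecidableRel G.Adj]
    (lab : V → S) (hlab : ∀ u v : V, lab u = lab v)
    (i : ℕ) (u v : V) :
    kappa G lab i u = kappa G lab i v ↔ ec G i u = ec G i v := by
  simp only [kappa_of_forall_eq G lab (lab u) (hlab · u)]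
  exact (Multiset.replicate_left_injective _).eq_iff

/-- for uniform labels, κ^{(i)} and ec^{(i)} are equivalent labelings. -/
theorem stmt_5 {V S : Type*} [Fintype V] (G : SimpleGraph V) [DecidableRel G.Adj]
    (lab : V → S) (hlab : ∀ u v : V, lab u = lab v)
    (i : ℕ) (hi : 1 ≤ i) (u v : V) :
    kappa G lab i u = kappa G lab i v ↔ ec G i u = ec G i v :=
  stmt_5_general G lab hlab i u v
end

section
/- There exists a graph G (with uniform labels) containing nodes e and f such that the depth-2 unfolding trees T[2, e] and T[2, f] are non-isomorphic (so wl^{(2)}(e) ≠ wl^{(2)}(f)), yet κ₊^{(2)}(e) = κ₊^{(2)}(f), i.e., the multisets of label sequences of walks of length at most 2 starting at e and f coincide. Hence the refinement wl^{(ℓ)} ⊑ κ₊^{(ℓ)} can be strict. -/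
open Finset

/-- Canonical unordered rooted labeled trees of depth n. -/
def UTL (S : Type*) : ℕ → Type _
  | 0 => S
  | (n+1) => S × Multiset (UTL S n)

/-- The unfolding tree T[n, v]. -/
def unfoldT {V S : Type*} (G : SimpleGraph V) [Fintype V] [DecidableRel G.Adj]
    (lab : V → S) : (n : ℕ) → V → UTL S n
  | 0, v => lab v
  | (n+1), v => (lab v, (G.neighborFinset v).val.map (unfoldT G lab n))


-- ===== auxiliary material =====

def myAdj : Fin 9 → Fin 9 → Bool := fun a b =>
  let e : List (Fin 9 × Fin 9) := [(0,1),(0,2),(2,3),(2,4),(5,6),(5,7),(6,8),(7,8)]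
  (a,b) ∈ e ∨ (b,a) ∈ e

lemma myAdj_symm : ∀ a b : Fin 9, myAdj a b = true → myAdj b a = true := by decide
lemma myAdj_irrefl : ∀ a : Fin 9, ¬ myAdj a a = true := by decide

def myG : SimpleGraph (Fin 9) where
  Adj a b := myAdj a b = true
  symm := ⟨fun a b h => myAdj_symm a b h⟩
  loopless := ⟨fun a h => myAdj_irrefl a h⟩

instance : DecidableRel myG.Adj := fun a b => inferInstanceAs (Decidable (_ = true))

def decEqUTL {S : Type*} [DecidableEq S] : (n : ℕ) → DecidableEq (UTL S n)
  | 0 => inferInstanceAs (DecidableEq S)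
  | (n+1) => letI := decEqUTL (S := S) n
      inferInstanceAs (DecidableEq (S × Multiset (UTL S n)))

instance {S : Type*} [DecidableEq S] (n : ℕ) : DecidableEq (UTL S n) := decEqUTL n

def decEqWLL {S : Type*} [DecidableEq S] : (n : ℕ) → DecidableEq (WLL S n)
  | 0 => inferInstanceAs (DecidableEq S)
  | (n+1) => letI := decEqWLL (S := S) n
      inferInstanceAs (DecidableEq (WLL S n × Multiset (WLL S n)))

instance {S : Type*} [DecidableEq S] (n : ℕ) : DecidableEq (WLL S n) := decEqWLL n

lemma card_indep {X : Type} (a b : Fintype X) : @Fintype.card X a = @Fintype.card X b := by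
  cases Subsingleton.elim a b; rfl

instance (v : Fin 9) (k : ℕ) :
    DecidablePred (fun f : Fin (k+1) → Fin 9 => f 0 = v ∧ IsWalk myG f) := fun f => by
  unfold IsWalk; infer_instance

lemma walk_card (v : Fin 9) (k : ℕ) :
    Fintype.card (WalkFrom myG v k) =
      (Finset.univ.filter (fun f : Fin (k+1) → Fin 9 => f 0 = v ∧ IsWalk myG f)).card :=
  (card_indep _ _).trans (Fintype.card_subtype _)

lemma kappa_const {V : Type*} (G : SimpleGraph V) [Fintype V] (i : ℕ) (v : V) :
    kappa G (fun _ => ()) i v =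
      Multiset.replicate (Fintype.card (WalkFrom G v i)) (List.ofFn fun _ : Fin (i+1) => ()) := by
  unfold kappa
  have : (fun w : WalkFrom G v i => lseq (fun _ => ()) w.1)
      = fun _ => List.ofFn fun _ : Fin (i+1) => () := by
    funext w; rfl
  rw [this, Multiset.map_const']
  rfl

set_option maxRecDepth 100000 in
/-- there is a uniformly labeled graph with nodes e, f whose depth-2
unfolding trees are non-isomorphic (and wl^{(2)}(e) ≠ wl^{(2)}(f)), yet
κ₊^{(2)}(e) = κ₊^{(2)}(f): the refinement wl^{(ℓ)} ⊑ κ₊^{(ℓ)} can be strict. -/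
theorem stmt_11 :
    ∃ (V : Type) (_ : Fintype V) (G : SimpleGraph V) (_ : DecidableRel G.Adj) (e f : V),
      unfoldT G (fun _ => ()) 2 e ≠ unfoldT G (fun _ => ()) 2 f ∧
      wl G (fun _ => ()) 2 e ≠ wl G (fun _ => ()) 2 f ∧
      kappaPlus G (fun _ => ()) 2 e = kappaPlus G (fun _ => ()) 2 f := by
  classical
  refine ⟨Fin 9, inferInstance, myG, inferInstance, 0, 5, ?_, ?_, ?_⟩
  · decide
  · decide
  · unfold kappaPlus
    have key : ∀ i, i < 3 → Fintype.card (WalkFrom myG 0 i) = Fintype.card (WalkFrom myG 5 i) := by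
      intro i hi
      interval_cases i <;> rw [walk_card, walk_card] <;> decide
    refine Finset.sum_congr rfl fun i hi => ?_
    rw [kappa_const, kappa_const, key i (by simpa using hi)]
end
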